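/- For every integer n ≥ 4, the graph G = (complement of Cₙ) ∪ K₂ (disjoint union) is a W₂ graph with independence number 3. -/

import Mathlib

open Finset SimpleGraph
open scoped Classical

noncomputable section

/-- A finset of vertices is independent in `G`. -/
def IsIndep {V : Type*} (G : SimpleGraph V) (s : Finset V) : Prop :=
  ∀ u ∈ s, ∀ v ∈ s, ¬ G.Adj u v

/-- The independence number of a finite graph. -/
def indepNum {V : Type*} [Fintype V] (G : SimpleGraph V) : ℕ :=
  (Finset.univ.filter fun s : Finset V => IsIndep G s).sup Finset.card

/-- The independence polynomial of a finite graph, evaluated at `x`. -/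
def indepPoly {V : Type*} [Fintype V] (G : SimpleGraph V) (x : ℚ) : ℚ :=
  ∑ s ∈ Finset.univ.filter (fun s : Finset V => IsIndep G s), x ^ s.card

/-- The cycle graph on `ZMod n`. -/
def cycleG (n : ℕ) : SimpleGraph (ZMod n) :=
  SimpleGraph.fromRel (fun u v => u - v = 1)

/-- The closed neighborhood of a finset of vertices. -/
def closedNbhdF {V : Type*} (G : SimpleGraph V) (F : Finset V) : Set V :=
  ↑F ∪ {v | ∃ u ∈ F, G.Adj u v}

/-- `G` is a W₂ graph. -/
def IsW2 {V : Type*} [Fintype V] (G : SimpleGraph V) : Prop :=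
  2 ≤ Fintype.card V ∧
  ∀ A B : Finset V, IsIndep G A → IsIndep G B → Disjoint A B →
    ∃ A₀ B₀ : Finset V, IsIndep G A₀ ∧ IsIndep G B₀ ∧ A ⊆ A₀ ∧ B ⊆ B₀ ∧
      Disjoint A₀ B₀ ∧ A₀.card = _root_.indepNum G ∧ B₀.card = _root_.indepNum G

/-- A maximal independent set. -/
def IsMaxIndep {V : Type*} (G : SimpleGraph V) (s : Finset V) : Prop :=
  IsIndep G s ∧ ∀ v ∉ s, ¬ IsIndep G (insert v s)

/-- `G` is well-covered: all maximal independent sets have size `indepNum G`. -/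
def WellCovered {V : Type*} [Fintype V] (G : SimpleGraph V) : Prop :=
  ∀ s : Finset V, IsMaxIndep G s → s.card = _root_.indepNum G

/-- The disjoint union of two simple graphs. -/
def disjUnion {A B : Type*} (G : SimpleGraph A) (H : SimpleGraph B) :
    SimpleGraph (A ⊕ B) :=
  SimpleGraph.fromRel fun x y =>
    (∃ a b, x = Sum.inl a ∧ y = Sum.inl b ∧ G.Adj a b) ∨
    (∃ a b, x = Sum.inr a ∧ y = Sum.inr b ∧ H.Adj a b)


/-! Independent sets of a disjoint union are disjoint sums of independent sets of the parts, so
the independence number is additive and W₂ passes to disjoint unions; it remains to treat `Cₙᶜ`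
and `K₂`. For both, W₂ pairs are built greedily: an independent set `A` below the independence
number can always be enlarged by a vertex outside a given disjoint independent set `B`.
Independent sets of `Cₙᶜ` are cliques of the triangle-free `Cₙ` (`n ≥ 4`), so `α(Cₙᶜ) = 2`, and a
vertex `a` extends by `a + 1` or `a - 1`, which are not both in `B` as they are not adjacent in
`Cₙ`. -/

section Independence

variable {V : Type*} {G : SimpleGraph V}

lemma isIndep_singleton (v : V) : IsIndep G {v} := by
  simp [IsIndep]

lemma isIndep_pair {u v : V} (h : ¬ G.Adj u v) : IsIndep G {u, v} := by
  simp only [IsIndep, mem_insert, mem_singleton]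
  rintro _ (rfl | rfl) _ (rfl | rfl) <;> simp_all [G.adj_comm]

variable [Fintype V]

lemma IsIndep.card_le_indepNum {s : Finset V} (hs : IsIndep G s) : #s ≤ _root_.indepNum G :=
  le_sup (f := card) (mem_filter.mpr ⟨mem_univ s, hs⟩)

lemma exists_isIndep_card_eq_indepNum (G : SimpleGraph V) :
    ∃ s, IsIndep G s ∧ #s = _root_.indepNum G := by
  obtain ⟨s, hs, hcard⟩ := exists_mem_eq_sup (univ.filter fun s : Finset V => IsIndep G s)
    ⟨∅, mem_filter.mpr ⟨mem_univ _, by simp [IsIndep]⟩⟩ card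
  exact ⟨s, (mem_filter.mp hs).2, hcard.symm⟩

lemma exists_notMem_of_card_lt {s : Finset V} (hs : #s < Fintype.card V) : ∃ v, v ∉ s := by
  obtain ⟨v, -, hv⟩ := exists_mem_notMem_of_card_lt_card (hs.trans_eq card_univ.symm)
  exact ⟨v, hv⟩

lemma indepNum_eq_of_isIndep {s : Finset V} {k : ℕ} (hs : IsIndep G s) (hsk : #s = k)
    (hle : ∀ t, IsIndep G t → #t ≤ k) : _root_.indepNum G = k :=
  le_antisymm (Finset.sup_le fun t ht => hle t (mem_filter.mp ht).2) (hsk ▸ hs.card_le_indepNum)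

def HasIndepExtension (G : SimpleGraph V) : Prop :=
  ∀ A B : Finset V, IsIndep G A → IsIndep G B → Disjoint A B → #A < _root_.indepNum G →
    ∃ v ∉ A, v ∉ B ∧ IsIndep G (insert v A)

lemma HasIndepExtension.exists_superset {A B : Finset V} (hG : HasIndepExtension G)
    (hA : IsIndep G A) (hB : IsIndep G B) (hAB : Disjoint A B) :
    ∃ A₀, IsIndep G A₀ ∧ A ⊆ A₀ ∧ Disjoint A₀ B ∧ #A₀ = _root_.indepNum G := by
  induction h : _root_.indepNum G - #A generalizing A with
  | zero => exact ⟨A, hA, subset_rfl, hAB, le_antisymm hA.card_le_indepNum (by omega)⟩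
  | succ k ih =>
    obtain ⟨v, hvA, hvB, hvA'⟩ := hG A B hA hB hAB (by omega)
    obtain ⟨A₀, hA₀, hsub, hdisj, hcard⟩ := ih hvA' (disjoint_insert_left.mpr ⟨hvB, hAB⟩)
      (by rw [card_insert_of_notMem hvA]; omega)
    exact ⟨A₀, hA₀, (subset_insert v A).trans hsub, hdisj, hcard⟩

lemma HasIndepExtension.isW2 (hG : HasIndepExtension G) (hV : 2 ≤ Fintype.card V) : IsW2 G := by
  refine ⟨hV, fun A B hA hB hAB => ?_⟩
  obtain ⟨A₀, hA₀, hAA₀, hA₀B, hA₀card⟩ := hG.exists_superset hA hB hAB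
  obtain ⟨B₀, hB₀, hBB₀, hB₀A₀, hB₀card⟩ := hG.exists_superset hB hA₀ hA₀B.symm
  exact ⟨A₀, B₀, hA₀, hB₀, hAA₀, hBB₀, hB₀A₀.symm, hA₀card, hB₀card⟩

end Independence

section DisjUnion

variable {α β : Type*} {G : SimpleGraph α} {H : SimpleGraph β}

@[simp]
lemma disjUnion_adj_inl_inl {a b : α} :
    (_root_.disjUnion G H).Adj (.inl a) (.inl b) ↔ G.Adj a b := by
  simpa [_root_.disjUnion, G.adj_comm] using G.ne_of_adj

@[simp]
lemma disjUnion_adj_inr_inr {a b : β} :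
    (_root_.disjUnion G H).Adj (.inr a) (.inr b) ↔ H.Adj a b := by
  simpa [_root_.disjUnion, H.adj_comm] using H.ne_of_adj

@[simp]
lemma not_disjUnion_adj_inl_inr {a : α} {b : β} :
    ¬ (_root_.disjUnion G H).Adj (.inl a) (.inr b) := by
  simp [_root_.disjUnion]

@[simp]
lemma not_disjUnion_adj_inr_inl {a : α} {b : β} :
    ¬ (_root_.disjUnion G H).Adj (.inr b) (.inl a) := by
  simp [_root_.disjUnion]

lemma isIndep_disjSum_iff {s : Finset α} {t : Finset β} :
    IsIndep (_root_.disjUnion G H) (s.disjSum t) ↔ IsIndep G s ∧ IsIndep H t := by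
  simp [IsIndep, mem_disjSum]

lemma isIndep_disjUnion_iff {u : Finset (α ⊕ β)} :
    IsIndep (_root_.disjUnion G H) u ↔ IsIndep G u.toLeft ∧ IsIndep H u.toRight := by
  conv_lhs => rw [← toLeft_disjSum_toRight (u := u)]
  exact isIndep_disjSum_iff

lemma disjoint_disjSum_iff {s₁ s₂ : Finset α} {t₁ t₂ : Finset β} :
    Disjoint (s₁.disjSum t₁) (s₂.disjSum t₂) ↔ Disjoint s₁ s₂ ∧ Disjoint t₁ t₂ := by
  simp [Finset.disjoint_left, mem_disjSum]

variable [Fintype α] [Fintype β]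

lemma indepNum_disjUnion :
    _root_.indepNum (_root_.disjUnion G H) = _root_.indepNum G + _root_.indepNum H := by
  obtain ⟨s, hs, hscard⟩ := exists_isIndep_card_eq_indepNum G
  obtain ⟨t, ht, htcard⟩ := exists_isIndep_card_eq_indepNum H
  refine indepNum_eq_of_isIndep (isIndep_disjSum_iff.mpr ⟨hs, ht⟩)
    (by rw [card_disjSum, hscard, htcard]) fun u hu => ?_
  rw [isIndep_disjUnion_iff] at hu
  rw [← card_toLeft_add_card_toRight (u := u)]
  exact add_le_add hu.1.card_le_indepNum hu.2.card_le_indepNum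

lemma IsW2.disjUnion (hG : IsW2 G) (hH : IsW2 H) : IsW2 (_root_.disjUnion G H) := by
  refine ⟨by rw [Fintype.card_sum]; have := hG.1; omega, fun A B hA hB hAB => ?_⟩
  rw [isIndep_disjUnion_iff] at hA hB
  rw [← toLeft_disjSum_toRight (u := A), ← toLeft_disjSum_toRight (u := B),
    disjoint_disjSum_iff] at hAB
  obtain ⟨A₁, B₁, hA₁, hB₁, hAA₁, hBB₁, hAB₁, hA₁card, hB₁card⟩ := hG.2 _ _ hA.1 hB.1 hAB.1
  obtain ⟨A₂, B₂, hA₂, hB₂, hAA₂, hBB₂, hAB₂, hA₂card, hB₂card⟩ := hH.2 _ _ hA.2 hB.2 hAB.2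
  refine ⟨A₁.disjSum A₂, B₁.disjSum B₂, isIndep_disjSum_iff.mpr ⟨hA₁, hA₂⟩,
    isIndep_disjSum_iff.mpr ⟨hB₁, hB₂⟩, subset_disjSum.mpr ⟨hAA₁, hAA₂⟩,
    subset_disjSum.mpr ⟨hBB₁, hBB₂⟩, disjoint_disjSum_iff.mpr ⟨hAB₁, hAB₂⟩, ?_, ?_⟩ <;>
  rw [indepNum_disjUnion, card_disjSum] <;> omega

end DisjUnion

section Complete

variable {V : Type*}

lemma isIndep_top_iff {s : Finset V} : IsIndep (⊤ : SimpleGraph V) s ↔ #s ≤ 1 := by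
  simp [IsIndep, card_le_one]

variable [Fintype V]

lemma indepNum_top [Nonempty V] : _root_.indepNum (⊤ : SimpleGraph V) = 1 :=
  indepNum_eq_of_isIndep (isIndep_singleton (Classical.arbitrary V)) (card_singleton _)
    fun _ => isIndep_top_iff.mp

lemma isW2_top (hV : 2 ≤ Fintype.card V) : IsW2 (⊤ : SimpleGraph V) := by
  have : Nonempty V := Fintype.card_pos_iff.mp (by omega)
  refine HasIndepExtension.isW2 (fun A B _ hB _ hA => ?_) hV
  obtain rfl : A = ∅ := card_eq_zero.mp (by rw [indepNum_top] at hA; omega)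
  obtain ⟨v, hvB⟩ := exists_notMem_of_card_lt ((isIndep_top_iff.mp hB).trans_lt hV)
  exact ⟨v, notMem_empty v, hvB, isIndep_singleton v⟩

end Complete

section ComplCycle

variable {n : ℕ}

lemma cycleG_adj {a b : ZMod n} : (cycleG n).Adj a b ↔ a ≠ b ∧ (a - b = 1 ∨ b - a = 1) :=
  fromRel_adj ..

lemma natCast_ne_zero_of_lt {k : ℕ} (h0 : 0 < k) (hk : k < n) : (k : ZMod n) ≠ 0 := by
  rw [Ne, ZMod.natCast_eq_zero_iff]
  exact Nat.not_dvd_of_pos_of_lt h0 hk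

lemma card_le_two_of_isIndep_compl_cycleG (hn : 4 ≤ n) {s : Finset (ZMod n)}
    (hs : IsIndep (cycleG n)ᶜ s) : #s ≤ 2 := by
  have h1 : ((1 : ℕ) : ZMod n) ≠ 0 := natCast_ne_zero_of_lt one_pos (by omega)
  have h3 : ((3 : ℕ) : ZMod n) ≠ 0 := natCast_ne_zero_of_lt three_pos (by omega)
  push_cast at h1 h3
  have hadj : ∀ a ∈ s, ∀ b ∈ s, a ≠ b → a - b = 1 ∨ b - a = 1 := fun a ha b hb hab => by
    simpa [cycleG_adj, hab, or_iff_not_imp_left] using hs a ha b hb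
  by_contra! hcard
  obtain ⟨a, b, c, ha, hb, hc, hab, hac, hbc⟩ := two_lt_card_iff.mp hcard
  have := hadj a ha b hb hab
  have := hadj a ha c hc hac
  have := hadj b hb c hc hbc
  -- the differences around the triangle would be ±1 and sum to 0, impossible as 1, 3 ≠ 0
  grind

variable [NeZero n]

lemma indepNum_compl_cycleG (hn : 4 ≤ n) : _root_.indepNum (cycleG n)ᶜ = 2 := by
  have h1 : ((1 : ℕ) : ZMod n) ≠ 0 := natCast_ne_zero_of_lt one_pos (by omega)
  push_cast at h1
  refine indepNum_eq_of_isIndep (isIndep_pair (u := 0) (v := 1) ?_) (by simp [h1.symm])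
    fun _ => card_le_two_of_isIndep_compl_cycleG hn
  simp [cycleG_adj, h1.symm]

lemma hasIndepExtension_compl_cycleG (hn : 4 ≤ n) : HasIndepExtension (cycleG n)ᶜ := by
  intro A B _ hB _ hA
  rw [indepNum_compl_cycleG hn] at hA
  have hB2 := card_le_two_of_isIndep_compl_cycleG hn hB
  rcases A.eq_empty_or_nonempty with rfl | ⟨a, ha⟩
  · obtain ⟨v, hv⟩ := exists_notMem_of_card_lt (s := B) (by rw [ZMod.card]; omega)
    exact ⟨v, notMem_empty v, hv, isIndep_singleton v⟩
  obtain rfl : A = {a} := eq_singleton_iff_unique_mem.mpr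
    ⟨ha, fun b hb => card_le_one.mp (by omega) b hb a ha⟩
  have h1 : ((1 : ℕ) : ZMod n) ≠ 0 := natCast_ne_zero_of_lt one_pos (by omega)
  have h2 : ((2 : ℕ) : ZMod n) ≠ 0 := natCast_ne_zero_of_lt two_pos (by omega)
  have h3 : ((3 : ℕ) : ZMod n) ≠ 0 := natCast_ne_zero_of_lt three_pos (by omega)
  push_cast at h1 h2 h3
  obtain ⟨c, hca, hcB⟩ : ∃ c, (c - a = 1 ∨ a - c = 1) ∧ c ∉ B := by
    by_contra! h
    refine hB (a + 1) (h _ (.inl (by ring))) (a - 1) (h _ (.inr (by ring))) ⟨?_, ?_⟩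
    · exact fun h' => h2 (by linear_combination h')
    · rw [cycleG_adj]
      rintro ⟨-, h' | h'⟩
      · exact h1 (by linear_combination h')
      · exact h3 (by linear_combination -h')
  refine ⟨c, ?_, hcB, isIndep_pair ?_⟩
  · rw [mem_singleton]
    rintro rfl
    rcases hca with h | h <;> exact h1 (by linear_combination -h)
  · rw [compl_adj, cycleG_adj]
    tauto

lemma isW2_compl_cycleG (hn : 4 ≤ n) : IsW2 (cycleG n)ᶜ :=
  (hasIndepExtension_compl_cycleG hn).isW2 (by rw [ZMod.card]; omega)

end ComplCycle

/-- for every `n ≥ 4`, the graph `(complement of Cₙ) ∪ K₂` is a W₂ graph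
with independence number 3. -/
theorem stmt_18 (n : ℕ) [NeZero n] (hn : 4 ≤ n) :
    IsW2 (disjUnion ((cycleG n)ᶜ) (⊤ : SimpleGraph (Fin 2))) ∧
    _root_.indepNum (disjUnion ((cycleG n)ᶜ) (⊤ : SimpleGraph (Fin 2))) = 3 := by
  refine ⟨(isW2_compl_cycleG hn).disjUnion (isW2_top (by simp)), ?_⟩
  rw [indepNum_disjUnion, indepNum_compl_cycleG hn, indepNum_top]
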